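/- The plus version of any transitive avoidance game is not a Player I win. -/

import Mathlib

/-- A strategy for the plus version of the game: given the history of (set-)moves so
far, choose the next set of points to claim. -/
abbrev PlusStrategy (X : Type*) := List (Finset X) → Finset X

/-- The set of all points claimed so far in a history. -/
def histUnion {X : Type*} [DecidableEq X] (h : List (Finset X)) : Finset X :=
  h.foldr (· ∪ ·) ∅

/-- A plus-strategy is valid if, whenever the board is not yet full, it picks a
nonempty set of previously unclaimed points. -/
def ValidPlusStrategy {X : Type*} [Fintype X] [DecidableEq X] (s : PlusStrategy X) : Prop :=
  ∀ h : List (Finset X), histUnion h ≠ Finset.univ →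
    (s h).Nonempty ∧ Disjoint (s h) (histUnion h)

/-- The play after `k` moves when Player I uses `sI` (moving at even times) and
Player II uses `sII` (moving at odd times); once the board is full the game is over
and we record empty moves. -/
def playPlus {X : Type*} [Fintype X] [DecidableEq X] (sI sII : PlusStrategy X) :
    ℕ → List (Finset X)
  | 0 => []
  | k + 1 =>
      let h := playPlus sI sII k
      h ++ [if histUnion h = Finset.univ then ∅
            else if k % 2 = 0 then sI h else sII h]

/-- The set of points claimed by Player I in a history: the union of the moves at
even positions. -/
def plusClaimedI {X : Type*} (h : List (Finset X)) : Set X :=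
  { x | ∃ i : ℕ, i % 2 = 0 ∧ ∃ S : Finset X, h[i]? = some S ∧ x ∈ S }

/-- The set of points claimed by Player II in a history: the union of the moves at
odd positions. -/
def plusClaimedII {X : Type*} (h : List (Finset X)) : Set X :=
  { x | ∃ i : ℕ, i % 2 = 1 ∧ ∃ S : Finset X, h[i]? = some S ∧ x ∈ S }

/-- A set of points contains a line of `ℒ`. -/
def ContainsLine {X : Type*} (ℒ : Set (Finset X)) (S : Set X) : Prop :=
  ∃ L ∈ ℒ, ↑L ⊆ S

/-- The plus version of the avoidance game with lines `ℒ` is a Player I win: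
Player I has a valid plus-strategy such that against every valid plus-strategy of
Player II there is a moment at which Player II's claimed set contains a line while
Player I's claimed set does not (by monotonicity of the claimed sets, this says
exactly that Player II's set comes to contain a line strictly before Player I's). -/
def PlusPIWin {X : Type*} [Fintype X] [DecidableEq X] (ℒ : Set (Finset X)) : Prop :=
  ∃ sI : PlusStrategy X, ValidPlusStrategy sI ∧
    ∀ sII : PlusStrategy X, ValidPlusStrategy sII →
      ∃ k : ℕ,
        ContainsLine ℒ (plusClaimedII (playPlus sI sII k)) ∧
        ¬ ContainsLine ℒ (plusClaimedI (playPlus sI sII k))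

/-- A permutation of the board is an automorphism of the game if it maps the family of
lines onto itself. -/
def IsGameAuto {X : Type*} [DecidableEq X] (ℒ : Set (Finset X)) (g : Equiv.Perm X) : Prop :=
  ∀ L : Finset X, L ∈ ℒ ↔ L.image g ∈ ℒ

/-- The game is transitive if its automorphism group acts transitively on the board. -/
def TransitiveGame {X : Type*} [DecidableEq X] (ℒ : Set (Finset X)) : Prop :=
  ∀ x y : X, ∃ g : Equiv.Perm X, IsGameAuto ℒ g ∧ g x = y

/-!
Strategy stealing. Suppose Player I wins with `s`, with opening move `A`, and fix an automorphism
`g`. Against `s`, Player II runs an imaginary game in which Player I also plays `s`: the real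
Player II claims the free part of `g (imaginary board)`, the imaginary Player II the free part of
`g⁻¹ (real board)`. The real board is then always `A ∪ g (imaginary board)`, so real Player II's
points lie in `g` of imaginary Player I's, and `g` of imaginary Player II's points lie in real
Player I's. The copied moves are nonempty because each contains the image of the latest move of
`s`, except the first two, which need `g A ≠ A`; transitivity provides such a `g` unless `A` is
the whole board. If real Player II completed a line first, imaginary Player I would have a line
one move earlier while imaginary Player II had none, so `s` would lose the imaginary game.
-/

open Finset

section Histories

variable {X : Type*}

def claimedAt (p : ℕ) (h : List (Finset X)) : Set X :=
  {x | ∃ i, i % 2 = p ∧ ∃ S : Finset X, h[i]? = some S ∧ x ∈ S}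

lemma plusClaimedI_eq_claimedAt (h : List (Finset X)) : plusClaimedI h = claimedAt 0 h := rfl

lemma plusClaimedII_eq_claimedAt (h : List (Finset X)) : plusClaimedII h = claimedAt 1 h := rfl

lemma claimedAt_nil (p : ℕ) : claimedAt p ([] : List (Finset X)) = ∅ := by
  simp [claimedAt]

lemma claimedAt_subset_append (p : ℕ) (h l : List (Finset X)) :
    claimedAt p h ⊆ claimedAt p (h ++ l) := by
  rintro x ⟨i, hi, S, hS, hx⟩
  obtain ⟨hlt, -⟩ := List.getElem?_eq_some_iff.mp hS
  exact ⟨i, hi, S, by rw [List.getElem?_append_left hlt, hS], hx⟩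

lemma claimedAt_append_singleton (p : ℕ) (h : List (Finset X)) (a : Finset X) :
    claimedAt p (h ++ [a]) = claimedAt p h ∪ {x | h.length % 2 = p ∧ x ∈ a} := by
  ext x
  simp only [claimedAt, List.getElem?_append, List.getElem?_singleton, Set.mem_union,
    Set.mem_ofPred_eq]
  constructor
  · rintro ⟨i, hi, S, hS, hx⟩
    split_ifs at hS with hlt heq
    · exact Or.inl ⟨i, hi, S, hS, hx⟩
    · obtain rfl : a = S := Option.some_inj.mp hS
      exact Or.inr ⟨by omega, hx⟩
  · rintro (⟨i, hi, S, hS, hx⟩ | ⟨hp, hx⟩)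
    · exact ⟨i, hi, S, by rw [if_pos (List.getElem?_eq_some_iff.mp hS).1, hS], hx⟩
    · exact ⟨h.length, hp, a, by simp, hx⟩

variable [DecidableEq X]

lemma histUnion_append_singleton (h : List (Finset X)) (a : Finset X) :
    histUnion (h ++ [a]) = histUnion h ∪ a := by
  induction h with
  | nil => simp [histUnion]
  | cons b h ih =>
    simp only [histUnion, List.cons_append, List.foldr_cons] at ih ⊢
    rw [ih, union_assoc]

end Histories

section Lines

variable {X : Type*} {ℒ : Set (Finset X)} {S T : Set X}

lemma ContainsLine.mono (hS : ContainsLine ℒ S) (hST : S ⊆ T) : ContainsLine ℒ T :=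
  let ⟨L, hL, hLS⟩ := hS
  ⟨L, hL, hLS.trans hST⟩

variable [DecidableEq X]

lemma isGameAuto_one (ℒ : Set (Finset X)) : IsGameAuto ℒ 1 := by
  intro L
  simp

lemma containsLine_image_iff {g : Equiv.Perm X} (hg : IsGameAuto ℒ g) :
    ContainsLine ℒ (g '' S) ↔ ContainsLine ℒ S := by
  constructor
  · rintro ⟨L, hL, hLS⟩
    refine ⟨L.image g.symm, (hg _).2 (by simpa [image_image] using hL), ?_⟩
    rw [coe_image, ← g.symm_image_image S]
    exact Set.image_mono hLS
  · rintro ⟨L, hL, hLS⟩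
    exact ⟨L.image g, (hg L).1 hL, by rw [coe_image]; exact Set.image_mono hLS⟩

lemma TransitiveGame.exists_image_ne [Fintype X] (htrans : TransitiveGame ℒ) {A : Finset X}
    (hne : A.Nonempty) (huniv : A ≠ univ) :
    ∃ g : Equiv.Perm X, IsGameAuto ℒ g ∧ A.image g ≠ A := by
  obtain ⟨x, hx⟩ := hne
  obtain ⟨y, hy⟩ := not_forall.mp fun h => huniv (eq_univ_iff_forall.mpr h)
  obtain ⟨g, hg, rfl⟩ := htrans x y
  exact ⟨g, hg, fun h => hy (h ▸ mem_image_of_mem g hx)⟩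

end Lines

section Plays

variable {X : Type*} [Fintype X] [DecidableEq X]

def plusMove (s : PlusStrategy X) (h : List (Finset X)) : Finset X :=
  if histUnion h = univ then ∅ else s h

lemma not_subset_histUnion_append_plusMove {s : PlusStrategy X} (hs : ValidPlusStrategy s)
    {h : List (Finset X)} (hfull : histUnion h ≠ univ) :
    ¬ histUnion (h ++ [plusMove s h]) ⊆ histUnion h := by
  obtain ⟨⟨x, hx⟩, hdisj⟩ := hs h hfull
  rw [histUnion_append_singleton, plusMove, if_neg hfull]
  exact fun hsub => disjoint_left.mp hdisj hx (hsub (mem_union_right _ hx))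

lemma playPlus_succ (sI sII : PlusStrategy X) (k : ℕ) :
    playPlus sI sII (k + 1) = playPlus sI sII k ++
      [if k % 2 = 0 then plusMove sI (playPlus sI sII k)
        else plusMove sII (playPlus sI sII k)] := by
  rw [playPlus, plusMove, plusMove]
  split_ifs <;> rfl

lemma plusMove_nil_nonempty {s : PlusStrategy X} (hs : ValidPlusStrategy s)
    (h : plusMove s [] ≠ univ) : (plusMove s []).Nonempty := by
  have hnil : histUnion [] ≠ (univ : Finset X) := fun hnil => h ((if_pos hnil).trans hnil)
  rw [plusMove, if_neg hnil]
  exact (hs [] hnil).1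

lemma claimedAt_playPlus_mono (sI sII : PlusStrategy X) (p : ℕ) :
    Monotone fun k => claimedAt p (playPlus sI sII k) :=
  monotone_nat_of_le_succ fun k => by
    rw [playPlus_succ]
    exact claimedAt_subset_append p _ _

lemma containsLine_plusClaimedII_of_win {ℒ : Set (Finset X)} {sI sII : PlusStrategy X}
    (hwin : ∃ k, ContainsLine ℒ (plusClaimedII (playPlus sI sII k)) ∧
      ¬ ContainsLine ℒ (plusClaimedI (playPlus sI sII k)))
    {n : ℕ} (hI : ContainsLine ℒ (plusClaimedI (playPlus sI sII n))) :
    ContainsLine ℒ (plusClaimedII (playPlus sI sII n)) := by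
  obtain ⟨k, hII, hnI⟩ := hwin
  rcases le_total k n with hkn | hnk
  · exact hII.mono (claimedAt_playPlus_mono sI sII 1 hkn)
  · exact (hnI (hI.mono (claimedAt_playPlus_mono sI sII 0 hnk))).elim

def legalize (S : Finset X) (h : List (Finset X)) : Finset X :=
  if (S \ histUnion h).Nonempty then S \ histUnion h else univ \ histUnion h

lemma validPlusStrategy_legalize (F : List (Finset X) → Finset X) :
    ValidPlusStrategy fun h => legalize (F h) h := by
  intro h hfull
  dsimp only [legalize]
  split_ifs with hne
  · exact ⟨hne, sdiff_disjoint⟩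
  · exact ⟨sdiff_nonempty.mpr fun hsub => hfull (univ_subset_iff.mp hsub), sdiff_disjoint⟩

lemma legalize_of_nonempty {S : Finset X} {h : List (Finset X)}
    (hne : (S \ histUnion h).Nonempty) : legalize S h = S \ histUnion h :=
  if_pos hne

end Plays

lemma Finset.image_perm_eq_of_subset {X : Type*} [DecidableEq X] {g : Equiv.Perm X}
    {A : Finset X} (h : A.image g ⊆ A) : A.image g = A :=
  eq_of_subset_of_card_le h (card_image_of_injective A g.injective).ge

section Mirror

variable {X : Type*} [Fintype X] [DecidableEq X] (s : PlusStrategy X) (g : Equiv.Perm X)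

/-- After `n` rounds: the real play, with `n + 1` moves, and the imaginary play, with `n`
moves. -/
def mirrorPlay : ℕ → List (Finset X) × List (Finset X)
  | 0 => ([plusMove s []], [])
  | n + 1 =>
    let R := (mirrorPlay n).1
    let I := (mirrorPlay n).2
    if n % 2 = 0 then
      let I' := I ++ [plusMove s I]
      (R ++ [(histUnion I').image g \ histUnion R], I')
    else
      let R' := R ++ [plusMove s R]
      (R', I ++ [(histUnion R').image g.symm \ histUnion I])

lemma mirrorPlay_fst_succ_of_even {n : ℕ} (hn : n % 2 = 0) :
    (mirrorPlay s g (n + 1)).1 = (mirrorPlay s g n).1 ++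
      [(histUnion (mirrorPlay s g (n + 1)).2).image g \ histUnion (mirrorPlay s g n).1] := by
  simp [mirrorPlay, hn]

lemma mirrorPlay_snd_succ_of_even {n : ℕ} (hn : n % 2 = 0) :
    (mirrorPlay s g (n + 1)).2 = (mirrorPlay s g n).2 ++ [plusMove s (mirrorPlay s g n).2] := by
  simp [mirrorPlay, hn]

lemma mirrorPlay_fst_succ_of_odd {n : ℕ} (hn : n % 2 = 1) :
    (mirrorPlay s g (n + 1)).1 = (mirrorPlay s g n).1 ++ [plusMove s (mirrorPlay s g n).1] := by
  simp [mirrorPlay, hn]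

lemma mirrorPlay_snd_succ_of_odd {n : ℕ} (hn : n % 2 = 1) :
    (mirrorPlay s g (n + 1)).2 = (mirrorPlay s g n).2 ++
      [(histUnion (mirrorPlay s g (n + 1)).1).image g.symm \ histUnion (mirrorPlay s g n).2] := by
  simp [mirrorPlay, hn]

lemma mirrorPlay_succ_eq_append (n : ℕ) : ∃ a b, mirrorPlay s g (n + 1) =
    ((mirrorPlay s g n).1 ++ [a], (mirrorPlay s g n).2 ++ [b]) := by
  rw [mirrorPlay]
  split_ifs <;> exact ⟨_, _, rfl⟩

lemma mirrorPlay_length (n : ℕ) :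
    (mirrorPlay s g n).1.length = n + 1 ∧ (mirrorPlay s g n).2.length = n := by
  induction n with
  | zero => simp [mirrorPlay]
  | succ n ih =>
    obtain ⟨a, b, h⟩ := mirrorPlay_succ_eq_append s g n
    simp [h, ih]

lemma histUnion_mirrorPlay_fst_mono : Monotone fun n => histUnion (mirrorPlay s g n).1 :=
  monotone_nat_of_le_succ fun n => by
    obtain ⟨a, b, h⟩ := mirrorPlay_succ_eq_append s g n
    simp [h, histUnion_append_singleton]

lemma histUnion_mirrorPlay_snd_mono : Monotone fun n => histUnion (mirrorPlay s g n).2 :=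
  monotone_nat_of_le_succ fun n => by
    obtain ⟨a, b, h⟩ := mirrorPlay_succ_eq_append s g n
    simp [h, histUnion_append_singleton]

lemma histUnion_mirrorPlay_zero_fst : histUnion (mirrorPlay s g 0).1 = plusMove s [] := by
  simp [mirrorPlay, histUnion]

lemma histUnion_mirrorPlay_one_snd : histUnion (mirrorPlay s g 1).2 = plusMove s [] := by
  simp [mirrorPlay, histUnion]

lemma histUnion_mirrorPlay_fst (n : ℕ) :
    histUnion (mirrorPlay s g n).1 =
      plusMove s [] ∪ (histUnion (mirrorPlay s g n).2).image g := by
  induction n with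
  | zero => simp [mirrorPlay, histUnion]
  | succ n ih =>
    rcases Nat.mod_two_eq_zero_or_one n with hn | hn
    · have hmono := image_subset_image (f := g) (histUnion_mirrorPlay_snd_mono s g n.le_succ)
      rw [mirrorPlay_fst_succ_of_even s g hn, histUnion_append_singleton, ih,
        union_sdiff_self_eq_union, union_assoc, union_eq_right.mpr hmono]
    · have hmono := histUnion_mirrorPlay_fst_mono s g n.le_succ
      rw [mirrorPlay_snd_succ_of_odd s g hn, histUnion_append_singleton,
        union_sdiff_self_eq_union, image_union, ← union_assoc, ← ih]
      simpa [image_image] using hmono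

lemma histUnion_mirrorPlay_fst_of_two_le {n : ℕ} (hn : 2 ≤ n) :
    histUnion (mirrorPlay s g n).1 = (histUnion (mirrorPlay s g n).2).image g := by
  have hA : (plusMove s []).image g.symm ⊆ histUnion (mirrorPlay s g n).2 := by
    refine Subset.trans ?_ (histUnion_mirrorPlay_snd_mono s g hn)
    change _ ⊆ histUnion (mirrorPlay s g (1 + 1)).2
    rw [mirrorPlay_snd_succ_of_odd s g (n := 1) rfl, histUnion_append_singleton,
      union_sdiff_self_eq_union, ← histUnion_mirrorPlay_zero_fst s g]
    exact (image_subset_image (histUnion_mirrorPlay_fst_mono s g (Nat.zero_le 2))).trans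
      subset_union_right
  rw [histUnion_mirrorPlay_fst, union_eq_right]
  simpa [image_image] using image_subset_image (f := g) hA

def stealingStrategy : PlusStrategy X := fun h =>
  legalize ((histUnion (mirrorPlay s g h.length).2).image g) h

def mirroringStrategy : PlusStrategy X := fun h =>
  legalize ((histUnion (mirrorPlay s g (h.length + 1)).1).image g.symm) h

lemma validPlusStrategy_stealingStrategy : ValidPlusStrategy (stealingStrategy s g) :=
  validPlusStrategy_legalize _

lemma validPlusStrategy_mirroringStrategy : ValidPlusStrategy (mirroringStrategy s g) :=
  validPlusStrategy_legalize _

lemma plusClaimedII_mirrorPlay_fst_subset (n : ℕ) :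
    plusClaimedII (mirrorPlay s g n).1 ⊆ g '' plusClaimedI (mirrorPlay s g n).2 := by
  simp only [plusClaimedI_eq_claimedAt, plusClaimedII_eq_claimedAt]
  induction n with
  | zero =>
    rintro x ⟨i, hi, S, hS, -⟩
    simp only [mirrorPlay, List.getElem?_singleton] at hS
    split_ifs at hS with h0
    · omega
  | succ n ih =>
    rcases Nat.mod_two_eq_zero_or_one n with hn | hn
    · rw [mirrorPlay_fst_succ_of_even s g hn, claimedAt_append_singleton,
        mirrorPlay_snd_succ_of_even s g hn, claimedAt_append_singleton,
        (mirrorPlay_length s g n).1, (mirrorPlay_length s g n).2, Set.image_union]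
      rintro x (hx | ⟨-, hx⟩)
      · exact Or.inl (ih hx)
      · rw [histUnion_append_singleton, histUnion_mirrorPlay_fst, image_union] at hx
        simp only [mem_sdiff, mem_union, not_or] at hx
        obtain ⟨y, hy, rfl⟩ := mem_image.mp (hx.1.resolve_left hx.2.2)
        exact Or.inr ⟨y, ⟨hn, hy⟩, rfl⟩
    · rw [mirrorPlay_fst_succ_of_odd s g hn, claimedAt_append_singleton,
        mirrorPlay_snd_succ_of_odd s g hn, claimedAt_append_singleton,
        (mirrorPlay_length s g n).1, (mirrorPlay_length s g n).2]
      rintro x (hx | ⟨hodd, -⟩)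
      · exact Set.image_mono Set.subset_union_left (ih hx)
      · omega

lemma image_plusClaimedII_mirrorPlay_snd_subset (n : ℕ) :
    ↑(plusMove s []) ∪ g '' plusClaimedII (mirrorPlay s g n).2 ⊆
      plusClaimedI (mirrorPlay s g n).1 := by
  simp only [plusClaimedI_eq_claimedAt, plusClaimedII_eq_claimedAt]
  induction n with
  | zero =>
    simp only [mirrorPlay, claimedAt_nil, Set.image_empty, Set.union_empty]
    exact fun x hx => ⟨0, rfl, _, rfl, hx⟩
  | succ n ih =>
    rcases Nat.mod_two_eq_zero_or_one n with hn | hn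
    · rw [mirrorPlay_fst_succ_of_even s g hn, claimedAt_append_singleton,
        mirrorPlay_snd_succ_of_even s g hn, claimedAt_append_singleton,
        (mirrorPlay_length s g n).1, (mirrorPlay_length s g n).2]
      rintro x (hA | ⟨y, hy | ⟨hodd, -⟩, rfl⟩)
      · exact Or.inl (ih (Or.inl hA))
      · exact Or.inl (ih (Or.inr ⟨y, hy, rfl⟩))
      · omega
    · rw [mirrorPlay_fst_succ_of_odd s g hn, claimedAt_append_singleton,
        mirrorPlay_snd_succ_of_odd s g hn, claimedAt_append_singleton,
        (mirrorPlay_length s g n).1, (mirrorPlay_length s g n).2]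
      rintro x (hA | ⟨y, hy | ⟨-, hy⟩, rfl⟩)
      · exact Or.inl (ih (Or.inl hA))
      · exact Or.inl (ih (Or.inr ⟨y, hy, rfl⟩))
      · rw [mirrorPlay_fst_succ_of_odd s g hn, histUnion_append_singleton,
          histUnion_mirrorPlay_fst] at hy
        simp only [mem_sdiff, mem_image, mem_union] at hy
        obtain ⟨⟨z, (hz | ⟨w, hw, rfl⟩) | hz, rfl⟩, hy⟩ := hy
        · rw [Equiv.apply_symm_apply]
          exact Or.inl (ih (Or.inl hz))
        · exact (hy (by rwa [Equiv.symm_apply_apply])).elim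
        · rw [Equiv.apply_symm_apply]
          exact Or.inr ⟨by omega, hz⟩

variable {s g}

lemma histUnion_mirrorPlay_snd_ne_univ {n : ℕ} (hn : 2 ≤ n)
    (hfull : histUnion (mirrorPlay s g n).1 ≠ univ) :
    histUnion (mirrorPlay s g n).2 ≠ univ := by
  intro h
  rw [histUnion_mirrorPlay_fst_of_two_le s g hn, h, image_univ_equiv] at hfull
  exact hfull rfl

variable (hs : ValidPlusStrategy s) 
    (hgA : plusMove s [] ≠ univ → (plusMove s []).image g ≠ plusMove s [])
include hs hgA

lemma mirrorPlay_fst_move_nonempty {n : ℕ} (hn : n % 2 = 0)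
    (hfull : histUnion (mirrorPlay s g n).1 ≠ univ) :
    ((histUnion (mirrorPlay s g (n + 1)).2).image g \
      histUnion (mirrorPlay s g n).1).Nonempty := by
  rw [sdiff_nonempty]
  rcases n with _ | _ | n
  · rw [histUnion_mirrorPlay_zero_fst] at hfull ⊢
    rw [histUnion_mirrorPlay_one_snd]
    exact fun h => hgA hfull (image_perm_eq_of_subset h)
  · omega
  · rw [histUnion_mirrorPlay_fst_of_two_le s g (by omega), image_subset_image_iff g.injective,
      mirrorPlay_snd_succ_of_even s g hn]
    exact not_subset_histUnion_append_plusMove hs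
      (histUnion_mirrorPlay_snd_ne_univ (by omega) hfull)

lemma mirrorPlay_snd_move_nonempty {n : ℕ} (hn : n % 2 = 1)
    (hfull : histUnion (mirrorPlay s g n).2 ≠ univ) :
    ((histUnion (mirrorPlay s g (n + 1)).1).image g.symm \
      histUnion (mirrorPlay s g n).2).Nonempty := by
  rw [sdiff_nonempty]
  rcases n with _ | _ | _ | n
  · omega
  · rw [histUnion_mirrorPlay_one_snd] at hfull ⊢
    intro h
    have h02 : histUnion (mirrorPlay s g 0).1 ⊆ histUnion (mirrorPlay s g (0 + 1 + 1)).1 :=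
      histUnion_mirrorPlay_fst_mono s g (by omega)
    rw [histUnion_mirrorPlay_zero_fst] at h02
    have hsub : (plusMove s []).image g.symm ⊆ plusMove s [] := (image_subset_image h02).trans h
    apply hgA hfull
    simpa [image_image] using (congrArg (image g) (image_perm_eq_of_subset hsub)).symm
  · omega
  · have hR : histUnion (mirrorPlay s g (n + 3)).1 ≠ univ := by
      rw [histUnion_mirrorPlay_fst_of_two_le s g (by omega)]
      exact fun h => hfull (image_injective g.injective (h.trans (image_univ_equiv g).symm))
    rw [← image_subset_image_iff g.injective, image_image,
      ← histUnion_mirrorPlay_fst_of_two_le s g (by omega), mirrorPlay_fst_succ_of_odd s g hn]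
    simpa using not_subset_histUnion_append_plusMove hs hR

lemma playPlus_stealingStrategy (n : ℕ) :
    playPlus s (stealingStrategy s g) (n + 1) = (mirrorPlay s g n).1 := by
  induction n with
  | zero => simp [playPlus, mirrorPlay, plusMove]
  | succ n ih =>
    rw [playPlus_succ, ih]
    rcases Nat.mod_two_eq_zero_or_one n with hn | hn
    · rw [mirrorPlay_fst_succ_of_even s g hn, if_neg (by omega)]
      by_cases hfull : histUnion (mirrorPlay s g n).1 = univ
      · rw [plusMove, if_pos hfull, hfull, sdiff_eq_empty_iff_subset.mpr (subset_univ _)]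
      · rw [plusMove, if_neg hfull, stealingStrategy, (mirrorPlay_length s g n).1,
          legalize_of_nonempty (mirrorPlay_fst_move_nonempty hs hgA hn hfull)]
    · rw [mirrorPlay_fst_succ_of_odd s g hn, if_pos (by omega)]

lemma playPlus_mirroringStrategy (n : ℕ) :
    playPlus s (mirroringStrategy s g) n = (mirrorPlay s g n).2 := by
  induction n with
  | zero => rfl
  | succ n ih =>
    rw [playPlus_succ, ih]
    rcases Nat.mod_two_eq_zero_or_one n with hn | hn
    · rw [mirrorPlay_snd_succ_of_even s g hn, if_pos hn]
    · rw [mirrorPlay_snd_succ_of_odd s g hn, if_neg (by omega)]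
      by_cases hfull : histUnion (mirrorPlay s g n).2 = univ
      · rw [plusMove, if_pos hfull, hfull, sdiff_eq_empty_iff_subset.mpr (subset_univ _)]
      · rw [plusMove, if_neg hfull, mirroringStrategy, (mirrorPlay_length s g n).2,
          legalize_of_nonempty (mirrorPlay_snd_move_nonempty hs hgA hn hfull)]

end Mirror

/-- The plus version of any transitive avoidance game is not a Player I win. -/
theorem statement3 {X : Type*} [Fintype X] [DecidableEq X] (ℒ : Set (Finset X))
    (htrans : TransitiveGame ℒ) : ¬ PlusPIWin ℒ := by
  rintro ⟨s, hs, hwin⟩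
  set A := plusMove s []
  obtain ⟨g, hauto, hg⟩ : ∃ g, IsGameAuto ℒ g ∧ (A ≠ univ → A.image g ≠ A) := by
    by_cases hA : A = univ
    · exact ⟨1, isGameAuto_one ℒ, fun h => (h hA).elim⟩
    · obtain ⟨g, hauto, hg⟩ := htrans.exists_image_ne (plusMove_nil_nonempty hs hA) hA
      exact ⟨g, hauto, fun _ => hg⟩
  obtain ⟨_ | n, hII, hI⟩ := hwin _ (validPlusStrategy_stealingStrategy s g)
  · exact hI (hII.mono (by simp [playPlus, plusClaimedII_eq_claimedAt, claimedAt_nil]))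
  rw [playPlus_stealingStrategy hs hg] at hII hI
  have hImagI : ContainsLine ℒ (plusClaimedI (playPlus s (mirroringStrategy s g) n)) := by
    rw [playPlus_mirroringStrategy hs hg, ← containsLine_image_iff hauto]
    exact hII.mono (plusClaimedII_mirrorPlay_fst_subset s g n)
  have hImagII := containsLine_plusClaimedII_of_win
    (hwin _ (validPlusStrategy_mirroringStrategy s g)) hImagI
  rw [playPlus_mirroringStrategy hs hg, ← containsLine_image_iff hauto] at hImagII
  exact hI (hImagII.mono
    (Set.subset_union_right.trans (image_plusClaimedII_mirrorPlay_snd_subset s g n)))
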